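/- If a λ-term u is β-equivalent to a solvable λ-term, then u is solvable. -/

import Mathlib

namespace SO

/-- Untyped λ-terms in de Bruijn notation (modulo α-equivalence). -/
inductive Term : Type
  | var : ℕ → Term
  | lam : Term → Term
  | app : Term → Term → Term
deriving DecidableEq

namespace Term

/-- Shift the free variables `≥ c` up by one. -/
def lift (c : ℕ) : Term → Term
  | var i => if i < c then var i else var (i + 1)
  | lam t => lam (lift (c + 1) t)
  | app t u => app (lift c t) (lift c u)

/-- Substitute `s` for the free variable `j`. -/
def subst (j : ℕ) (s : Term) : Term → Term
  | var i => if i = j then s else if j < i then var (i - 1) else var i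
  | lam t => lam (subst (j + 1) (lift 0 s) t)
  | app t u => app (subst j s t) (subst j s u)

/-- One step of β-reduction (anywhere in the term). -/
inductive Beta : Term → Term → Prop
  | beta : Beta (app (lam t) u) (subst 0 u t)
  | appL : Beta t t' → Beta (app t u) (app t' u)
  | appR : Beta u u' → Beta (app t u) (app t u')
  | lam : Beta t t' → Beta (lam t) (lam t')

/-- β-equivalence `u ≃β v`. -/
def BetaEq : Term → Term → Prop := Relation.EqvGen Beta

/-- One step of head reduction: a term `λx₁…λxₙ (λx u)v w̄` reduces its head redex. -/
inductive HeadStep : Term → Term → Prop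
  | beta : HeadStep (app (lam t) u) (subst 0 u t)
  | app : HeadStep (app t u) w → HeadStep (app (app t u) v) (app w v)
  | lam : HeadStep t t' → HeadStep (lam t) (lam t')

/-- `u ≻ v` : `v` is obtained from `u` by finitely many head-reduction steps. -/
def HeadRed : Term → Term → Prop := Relation.ReflTransGen HeadStep

/-- Head normal form: no head-reduction step applies. -/
def IsHNF (t : Term) : Prop := ∀ u, ¬ HeadStep t u

/-- `t` is solvable iff the head reduction of `t` terminates. -/
def Solvable (t : Term) : Prop := ∃ u, HeadRed t u ∧ IsHNF u

/-- `FreeIn k t` : the variable (de Bruijn index) `k` occurs free in `t`. -/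
def FreeIn (k : ℕ) : Term → Prop
  | var i => i = k
  | lam t => FreeIn (k + 1) t
  | app t u => FreeIn k t ∨ FreeIn k u

/-- A term is closed iff it has no free variables. -/
def Closed (t : Term) : Prop := ∀ k, ¬ FreeIn k t

/-- `(u)^n v` : `u` applied `n` times to `v`. -/
def iterApp (u : Term) : ℕ → Term → Term
  | 0, v => v
  | n + 1, v => app u (iterApp u n v)

/-- The Church integer `n̄ = λf λx (f)^n x`. -/
def church (n : ℕ) : Term := lam (lam (iterApp (var 1) n (var 0)))

/-- A closed λ-term `S` is a successor iff `(S)k̄ ≃β (k+1)‾` for every `k`. -/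
def IsSuccessor (S : Term) : Prop :=
  Closed S ∧ ∀ k : ℕ, BetaEq (app S (church k)) (church (k + 1))

/-- A closed λ-term `T` is a storage operator iff for every `n ≥ 0` there is a closed
`τₙ ≃β n̄` such that for every `θₙ ≃β n̄` and fresh variable `f`,
`(T)θₙ f ≻ (f)τₙ`. -/
def IsStorageOp (T : Term) : Prop :=
  Closed T ∧ ∀ n : ℕ, ∃ τ : Term, Closed τ ∧ BetaEq τ (church n) ∧
    ∀ (θ : Term) (f : ℕ), BetaEq θ (church n) → ¬ FreeIn f θ →
      HeadRed (app (app T θ) (var f)) (app (var f) τ)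

end Term

end SO

open SO Term
namespace SB
open SO.Term
abbrev Tm := SO.Term
open SO.Term in
/-- rename bound-variable lifting -/
def upr (f : ℕ → ℕ) : ℕ → ℕ
  | 0 => 0
  | i + 1 => f i + 1

def rename (f : ℕ → ℕ) : Tm → Tm
  | .var i => .var (f i)
  | .lam t => .lam (rename (upr f) t)
  | .app t u => .app (rename f t) (rename f u)

def ups (σ : ℕ → Tm) : ℕ → Tm
  | 0 => .var 0
  | i + 1 => rename Nat.succ (σ i)

def sub (σ : ℕ → Tm) : Tm → Tm
  | .var i => σ i
  | .lam t => .lam (sub (ups σ) t)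
  | .app t u => .app (sub σ t) (sub σ u)

theorem upr_congr {f g : ℕ → ℕ} (h : ∀ i, f i = g i) : ∀ i, upr f i = upr g i
  | 0 => rfl
  | i + 1 => by simp [upr, h]

theorem rename_congr {f g : ℕ → ℕ} (h : ∀ i, f i = g i) : ∀ t, rename f t = rename g t
  | .var i => by simp [rename, h]
  | .lam t => by simp [rename]; exact rename_congr (upr_congr h) t
  | .app t u => by simp [rename, rename_congr h t, rename_congr h u]

theorem ups_congr {σ τ : ℕ → Tm} (h : ∀ i, σ i = τ i) : ∀ i, ups σ i = ups τ i
  | 0 => rfl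
  | i + 1 => by simp [ups, h]

theorem sub_congr {σ τ : ℕ → Tm} (h : ∀ i, σ i = τ i) : ∀ t, sub σ t = sub τ t
  | .var i => by simp [sub, h]
  | .lam t => by simp [sub]; exact sub_congr (ups_congr h) t
  | .app t u => by simp [sub, sub_congr h t, sub_congr h u]

theorem rename_rename (f g : ℕ → ℕ) : ∀ t, rename f (rename g t) = rename (fun i => f (g i)) t
  | .var i => rfl
  | .lam t => by
      simp [rename]
      rw [rename_rename (upr f) (upr g) t]
      exact rename_congr (fun i => by cases i <;> simp [upr]) t
  | .app t u => by simp [rename, rename_rename f g t, rename_rename f g u]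

theorem sub_rename (σ : ℕ → Tm) (f : ℕ → ℕ) : ∀ t, sub σ (rename f t) = sub (fun i => σ (f i)) t
  | .var i => rfl
  | .lam t => by
      simp [rename, sub]
      rw [sub_rename (ups σ) (upr f) t]
      exact sub_congr (fun i => by cases i <;> simp [ups, upr]) t
  | .app t u => by simp [rename, sub, sub_rename σ f t, sub_rename σ f u]

theorem rename_sub (f : ℕ → ℕ) (σ : ℕ → Tm) :
    ∀ t, rename f (sub σ t) = sub (fun i => rename f (σ i)) t
  | .var i => rfl
  | .lam t => by
      simp [rename, sub]
      rw [rename_sub (upr f) (ups σ) t]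
      exact sub_congr (fun i => by
        cases i with
        | zero => rfl
        | succ i =>
          simp [ups, rename_rename]
          exact rename_congr (fun j => rfl) (σ i)) t
  | .app t u => by simp [rename, sub, rename_sub f σ t, rename_sub f σ u]

theorem sub_sub (σ τ : ℕ → Tm) : ∀ t, sub σ (sub τ t) = sub (fun i => sub σ (τ i)) t
  | .var i => rfl
  | .lam t => by
      simp [sub]
      rw [sub_sub (ups σ) (ups τ) t]
      exact sub_congr (fun i => by
        cases i with
        | zero => rfl
        | succ i =>
          simp [ups]
          rw [sub_rename, rename_sub]
          exact sub_congr (fun j => rfl) (τ i)) t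
  | .app t u => by simp [sub, sub_sub σ τ t, sub_sub σ τ u]

theorem sub_id : ∀ t, sub (fun i => .var i) t = t
  | .var i => rfl
  | .lam t => by
      simp [sub]
      rw [sub_congr (show ∀ i, ups (fun i => SO.Term.var i) i = (fun i => SO.Term.var i) i from
        fun i => by cases i <;> simp [ups, rename])]
      exact sub_id t
  | .app t u => by simp [sub, sub_id t, sub_id u]

/-- the renaming underlying `lift c`. -/
def liftF (c : ℕ) (i : ℕ) : ℕ := if i < c then i else i + 1

/-- the substitution underlying `subst j s`. -/
def substF (j : ℕ) (s : Tm) (i : ℕ) : Tm :=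
  if i = j then s else if j < i then .var (i - 1) else .var i

theorem lift_eq (c : ℕ) : ∀ t, SO.Term.lift c t = rename (liftF c) t
  | .var i => by simp [SO.Term.lift, rename, liftF]; split <;> rfl
  | .lam t => by
      simp [SO.Term.lift, rename, lift_eq (c + 1) t]
      exact rename_congr (fun i => by
        cases i with
        | zero => simp [upr, liftF]
        | succ i => simp [upr, liftF]; split <;> [skip; skip] <;> omega) t
  | .app t u => by simp [SO.Term.lift, rename, lift_eq c t, lift_eq c u]

theorem subst_eq (j : ℕ) (s : Tm) : ∀ t, SO.Term.subst j s t = sub (substF j s) t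
  | .var i => by simp [SO.Term.subst, sub, substF]
  | .lam t => by
      simp [SO.Term.subst, sub, subst_eq (j + 1) (SO.Term.lift 0 s) t]
      exact sub_congr (fun i => by
        cases i with
        | zero => simp [ups, substF]
        | succ i =>
          simp only [ups, substF]
          rcases Nat.lt_trichotomy i j with h | rfl | h
          · rw [if_neg (by omega), if_neg (by omega), if_neg (by omega), if_neg (by omega)]
            simp [rename]
          · rw [if_pos rfl, if_pos rfl, lift_eq]
            exact (rename_congr (fun k => rfl) s).symm
          · rw [if_neg (by omega), if_pos (by omega), if_neg (by omega), if_pos (by omega)]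
            simp [rename]
            omega) t
  | .app t u => by simp [SO.Term.subst, sub, subst_eq j s t, subst_eq j s u]

end SB
namespace SB
open SO.Term
open Relation (ReflTransGen)

/-- Key substitution lemma A. -/
theorem subst_subst (j : ℕ) (N B A : Tm) :
    subst j N (subst 0 B A)
      = subst 0 (subst j N B) (subst (j + 1) (lift 0 N) A) := by
  rw [subst_eq j N, subst_eq 0 B, sub_sub,
      subst_eq 0 (subst j N B), subst_eq (j + 1) (lift 0 N), sub_sub]
  refine sub_congr (fun i => ?_) A
  cases i with
  | zero =>
    simp only [substF, if_pos rfl, if_neg (by omega : ¬ (0 : ℕ) = j + 1),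
      if_neg (by omega : ¬ j + 1 < 0)]
    simp [sub, substF]
    rw [subst_eq]
  | succ i =>
    have h0 : substF 0 B (i + 1) = .var i := by simp [substF]
    rw [h0]
    show substF j N i = sub (substF 0 (subst j N B)) (substF (j + 1) (lift 0 N) (i + 1))
    rcases Nat.lt_trichotomy i j with h | rfl | h
    · have e1 : substF (j+1) (lift 0 N) (i+1) = .var (i+1) := by
        simp only [substF]; rw [if_neg (by omega), if_neg (by omega)]
      have e2 : substF j N i = SO.Term.var i := by
        simp only [substF]; rw [if_neg (by omega), if_neg (by omega)]
      rw [e1, e2]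
      show SO.Term.var i = substF 0 (subst j N B) (i+1)
      simp only [substF]
      rw [if_neg (by omega), if_pos (by omega)]
      simp
    · have e1 : substF (i+1) (lift 0 N) (i+1) = lift 0 N := by simp [substF]
      have e2 : substF i N i = N := by simp [substF]
      rw [e1, e2]
      show N = sub (substF 0 (subst i N B)) (lift 0 N)
      rw [lift_eq, sub_rename]
      rw [sub_congr (fun k => show substF 0 (subst i N B) (liftF 0 k) = .var k by
        have hk : liftF 0 k = k + 1 := by simp [liftF]
        rw [hk]
        simp only [substF]
        rw [if_neg (by omega), if_pos (by omega)]
        simp) N]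
      exact (sub_id N).symm
    · have e1 : substF (j+1) (lift 0 N) (i+1) = .var i := by
        simp only [substF]
        rw [if_neg (by omega), if_pos (by omega)]
        simp
      have e2 : substF j N i = SO.Term.var (i - 1) := by
        simp only [substF]; rw [if_neg (by omega), if_pos h]
      rw [e1, e2]
      show SO.Term.var (i - 1) = substF 0 (subst j N B) i
      simp only [substF]
      rw [if_neg (by omega), if_pos (by omega)]

/-- Key substitution lemma B. -/
theorem lift_subst (c : ℕ) (B A : Tm) :
    lift c (subst 0 B A) = subst 0 (lift c B) (lift (c + 1) A) := by
  rw [subst_eq 0 B, lift_eq c, rename_sub, subst_eq 0 (lift c B), lift_eq (c+1), sub_rename]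
  refine sub_congr (fun i => ?_) A
  cases i with
  | zero => simp [substF, liftF, rename, lift_eq]
  | succ i =>
    have h0 : substF 0 B (i + 1) = .var i := by simp [substF]
    rw [h0]
    show SO.Term.var (liftF c i) = substF 0 (lift c B) (liftF (c+1) (i+1))
    have h1 : liftF (c+1) (i+1) = liftF c i + 1 := by simp [liftF]; split <;> omega
    rw [h1]
    simp [substF]

/-! ### Parallel reduction -/

inductive Par : Tm → Tm → Prop
  | var (i) : Par (.var i) (.var i)
  | lam : Par t t' → Par (.lam t) (.lam t')
  | app : Par t t' → Par u u' → Par (.app t u) (.app t' u')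
  | beta : Par t t' → Par u u' → Par (.app (.lam t) u) (subst 0 u' t')

theorem par_refl : ∀ t : Tm, Par t t
  | .var i => .var i
  | .lam t => .lam (par_refl t)
  | .app t u => .app (par_refl t) (par_refl u)

theorem beta_par {t t' : Tm} (h : Beta t t') : Par t t' := by
  induction h with
  | beta => exact .beta (par_refl _) (par_refl _)
  | appL _ ih => exact .app ih (par_refl _)
  | appR _ ih => exact .app (par_refl _) ih
  | lam _ ih => exact .lam ih

theorem par_lift {t t' : Tm} (h : Par t t') : ∀ c, Par (lift c t) (lift c t') := by
  induction h with
  | var i => intro c; simp only [lift]; split <;> exact .var _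
  | lam _ ih => intro c; exact .lam (ih (c + 1))
  | app _ _ ih1 ih2 => intro c; exact .app (ih1 c) (ih2 c)
  | beta _ _ ih1 ih2 =>
    intro c
    rw [show lift c (SO.Term.app (.lam _) _) = .app (.lam (lift (c+1) _)) (lift c _) from rfl,
        lift_subst]
    exact .beta (ih1 (c + 1)) (ih2 c)

theorem par_subst {M M' : Tm} (h : Par M M') :
    ∀ (j : ℕ) {N N' : Tm}, Par N N' → Par (subst j N M) (subst j N' M') := by
  induction h with
  | var i =>
    intro j N N' hN
    simp only [subst]
    split
    · exact hN
    · split <;> exact par_refl _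
  | lam _ ih => intro j N N' hN; exact .lam (ih (j + 1) (par_lift hN 0))
  | app _ _ ih1 ih2 => intro j N N' hN; exact .app (ih1 j hN) (ih2 j hN)
  | beta _ _ ih1 ih2 =>
    intro j N N' hN
    rw [subst_subst]
    exact .beta (ih1 (j + 1) (par_lift hN 0)) (ih2 j hN)

theorem par_subst0 {A A' B B' : Tm} (hA : Par A A') (hB : Par B B') :
    Par (subst 0 B A) (subst 0 B' A') := par_subst hA 0 hB

/-! ### Weak head (spine) reduction -/

inductive Hap1 : Tm → Tm → Prop
  | beta : Hap1 (.app (.lam t) u) (subst 0 u t)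
  | app : Hap1 t t' → Hap1 (.app t u) (.app t' u)

def Hap : Tm → Tm → Prop := ReflTransGen Hap1

theorem hap1_headstep {t t' : Tm} (h : Hap1 t t') : HeadStep t t' := by
  induction h with
  | beta => exact .beta
  | @app t t' u h ih =>
    obtain ⟨a, b, rfl⟩ : ∃ a b, t = .app a b := by cases h <;> exact ⟨_, _, rfl⟩
    exact .app ih

theorem hap_headred {t t' : Tm} (h : Hap t t') : HeadRed t t' :=
  Relation.ReflTransGen.mono (fun _ _ => hap1_headstep) _ _ h

theorem hap_appL {a a' c : Tm} (h : Hap a a') : Hap (.app a c) (.app a' c) :=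
  Relation.ReflTransGen.lift (fun x => SO.Term.app x c) (fun _ _ h => Hap1.app h) _ _ h

def apps : Tm → List Tm → Tm
  | t, [] => t
  | t, c :: l => apps (.app t c) l

theorem hap1_apps {a b : Tm} (h : Hap1 a b) : ∀ l, Hap1 (apps a l) (apps b l) := by
  intro l
  induction l generalizing a b with
  | nil => exact h
  | cons c l ih => exact ih (Hap1.app h)

theorem hap_apps {a b : Tm} (h : Hap a b) (l : List Tm) : Hap (apps a l) (apps b l) :=
  Relation.ReflTransGen.lift (fun x => apps x l) (fun _ _ h => hap1_apps h l) _ _ h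

theorem hap1_subst {M M' : Tm} (h : Hap1 M M') (j : ℕ) (N : Tm) :
    Hap1 (subst j N M) (subst j N M') := by
  induction h with
  | @beta t u =>
    rw [show subst j N (SO.Term.app (.lam t) u)
          = .app (.lam (subst (j+1) (lift 0 N) t)) (subst j N u) from rfl,
        subst_subst]
    exact .beta
  | app _ ih => exact .app ih

theorem hap_subst {M M' : Tm} (h : Hap M M') (j : ℕ) (N : Tm) :
    Hap (subst j N M) (subst j N M') :=
  Relation.ReflTransGen.lift (subst j N) (fun _ _ h => hap1_subst h j N) _ _ h

theorem hap1_lift {M M' : Tm} (h : Hap1 M M') (c : ℕ) : Hap1 (lift c M) (lift c M') := by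
  induction h with
  | @beta t u =>
    rw [show lift c (SO.Term.app (.lam t) u) = .app (.lam (lift (c+1) t)) (lift c u) from rfl,
        lift_subst]
    exact .beta
  | app _ ih => exact .app ih

theorem hap_lift {M M' : Tm} (h : Hap M M') (c : ℕ) : Hap (lift c M) (lift c M') :=
  Relation.ReflTransGen.lift (lift c) (fun _ _ h => hap1_lift h c) _ _ h

/-! ### Standard reduction (Kashima) -/

inductive St : Tm → Tm → Prop
  | var : Hap M (.var x) → St M (.var x)
  | app : Hap M (.app A B) → St A A' → St B B' → St M (.app A' B')
  | lam : Hap M (.lam A) → St A A' → St M (.lam A')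

theorem st_refl : ∀ M : Tm, St M M
  | .var i => .var .refl
  | .lam t => .lam .refl (st_refl t)
  | .app t u => .app .refl (st_refl t) (st_refl u)

theorem hap_st {L M N : Tm} (h : Hap L M) (hst : St M N) : St L N := by
  cases hst with
  | var h2 => exact .var (h.trans h2)
  | app h2 hA hB => exact .app (h.trans h2) hA hB
  | lam h2 hA => exact .lam (h.trans h2) hA

theorem st_lift {M M' : Tm} (h : St M M') : ∀ c, St (lift c M) (lift c M') := by
  induction h with
  | @var M x h =>
    intro c
    have h2 : Hap (lift c M) (lift c (.var x)) := hap_lift h c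
    simp only [lift] at h2 ⊢
    by_cases hx : x < c
    · rw [if_pos hx] at h2 ⊢; exact .var h2
    · rw [if_neg hx] at h2 ⊢; exact .var h2
  | app h2 _ _ ih1 ih2 => intro c; exact .app (hap_lift h2 c) (ih1 c) (ih2 c)
  | lam h2 _ ih => intro c; exact .lam (hap_lift h2 c) (ih (c + 1))

theorem st_subst {M M' : Tm} (h : St M M') :
    ∀ (j : ℕ) {N N' : Tm}, St N N' → St (subst j N M) (subst j N' M') := by
  induction h with
  | @var M x h =>
    intro j N N' hN
    have h2 : Hap (subst j N M) (subst j N (.var x)) := hap_subst h j N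
    simp only [subst] at h2 ⊢
    by_cases hx : x = j
    · rw [if_pos hx] at h2 ⊢
      exact hap_st h2 hN
    · rw [if_neg hx] at h2 ⊢
      by_cases hj : j < x
      · rw [if_pos hj] at h2 ⊢; exact .var h2
      · rw [if_neg hj] at h2 ⊢; exact .var h2
  | app h2 _ _ ih1 ih2 =>
    intro j N N' hN
    exact .app (hap_subst h2 j N) (ih1 j hN) (ih2 j hN)
  | lam h2 _ ih =>
    intro j N N' hN
    exact .lam (hap_subst h2 j N) (ih (j + 1) (st_lift hN 0))

theorem st_beta {N N' : Tm} (hb : Beta N N') : ∀ {M : Tm}, St M N → St M N' := by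
  induction hb with
  | @beta t u =>
    intro M h
    cases h with
    | app h2 hA hB =>
      cases hA with
      | lam h3 hA0 =>
        have h4 : Hap M (.app (.lam _) _) := h2.trans (hap_appL h3)
        have h5 : Hap M (subst 0 _ _) := h4.trans (Relation.ReflTransGen.single Hap1.beta)
        exact hap_st h5 (st_subst hA0 0 hB)
  | appL _ ih =>
    intro M h
    cases h with
    | app h2 hA hB => exact .app h2 (ih hA) hB
  | appR _ ih =>
    intro M h
    cases h with
    | app h2 hA hB => exact .app h2 hA (ih hB)
  | lam _ ih =>
    intro M h
    cases h with
    | lam h2 hA => exact .lam h2 (ih hA)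

theorem red_st {t s : Tm} (h : ReflTransGen Beta t s) : St t s := by
  induction h with
  | refl => exact st_refl t
  | tail _ hb ih => exact st_beta hb ih

/-! ### Head normal forms -/

inductive NE : Tm → Prop
  | var (i) : NE (.var i)
  | app : NE t → NE (.app t u)

inductive HNF : Tm → Prop
  | ne : NE t → HNF t
  | lam : HNF t → HNF (.lam t)

theorem ne_not_headstep {t : Tm} (h : NE t) : ∀ u, ¬ HeadStep t u := by
  induction h with
  | var i => intro u hs; cases hs
  | app hne ih =>
    intro u hs
    cases hs with
    | beta => cases hne
    | app hs' => exact ih _ hs'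

theorem hnf_isHNF {t : Tm} (h : HNF t) : IsHNF t := by
  induction h with
  | ne hne => exact ne_not_headstep hne
  | lam _ ih =>
    intro u hs
    cases hs with
    | lam hs' => exact ih _ hs'

theorem isHNF_hnf : ∀ {t : Tm}, IsHNF t → HNF t := by
  intro t
  induction t with
  | var i => exact fun _ => .ne (.var i)
  | lam t ih =>
    intro h
    exact .lam (ih (fun u s => h (.lam u) (.lam s)))
  | app t u iht _ =>
    intro h
    match t, iht with
    | .var i, _ => exact .ne (.app (.var i))
    | .lam t', _ => exact absurd HeadStep.beta (h _)
    | .app a b, iht =>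
      have h2 : IsHNF (.app a b) := fun w s => h _ (HeadStep.app s)
      cases iht h2 with
      | ne hne => exact .ne (.app hne)

theorem ne_apps {t : Tm} (h : NE t) : ∀ l, NE (apps t l) := by
  intro l
  induction l generalizing t with
  | nil => exact h
  | cons c l ih => exact ih (.app h)

theorem ne_par {t s : Tm} (h : NE t) (hp : Par t s) : NE s := by
  induction h generalizing s with
  | var i => cases hp; exact .var i
  | app hne ih =>
    cases hp with
    | app h1 h2 => exact .app (ih h1)
    | beta h1 h2 => cases hne

theorem hnf_par {t s : Tm} (h : HNF t) (hp : Par t s) : HNF s := by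
  induction h generalizing s with
  | ne hne => exact .ne (ne_par hne hp)
  | lam _ ih => cases hp with | lam h1 => exact .lam (ih h1)

/-! ### Solvability lemmas -/

theorem headred_lam {t t' : Tm} (h : HeadRed t t') : HeadRed (.lam t) (.lam t') :=
  Relation.ReflTransGen.lift SO.Term.lam (fun _ _ h => HeadStep.lam h) _ _ h

theorem solvable_headred {a b : Tm} (h : HeadRed a b) (hb : Solvable b) : Solvable a := by
  obtain ⟨w, hw, hnf⟩ := hb
  exact ⟨w, h.trans hw, hnf⟩

theorem ne_solv {M M' : Tm} (h : St M M') (hne : NE M') : ∀ l, Solvable (apps M l) := by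
  induction h with
  | @var M x h =>
    intro l
    exact ⟨apps (.var x) l, hap_headred (hap_apps h l),
      hnf_isHNF (.ne (ne_apps (.var x) l))⟩
  | @app M A B A' B' h2 hA hB ihA ihB =>
    intro l
    cases hne with
    | app hA' =>
      refine solvable_headred (hap_headred (hap_apps h2 l)) ?_
      exact ihA hA' (B :: l)
  | lam h2 hA ih => cases hne

theorem hnf_solv {t s : Tm} (h : St t s) (hh : HNF s) : Solvable t := by
  cases h with
  | @var t x h => exact ⟨.var x, hap_headred h, hnf_isHNF (.ne (.var x))⟩
  | @app t A B A' B' h2 hA hB =>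
    cases hh with
    | ne hne =>
      cases hne with
      | app hA' =>
        exact solvable_headred (hap_headred h2) (ne_solv hA hA' [B])
  | @lam t A A' h2 hA =>
    cases hh with
    | ne hne => cases hne
    | lam hh' =>
      obtain ⟨w, hw, hwhnf⟩ := hnf_solv hA hh'
      exact ⟨.lam w, (hap_headred h2).trans (headred_lam hw),
        hnf_isHNF (.lam (isHNF_hnf hwhnf))⟩

/-! ### Forward direction: parallel step commutation with head steps -/

theorem parD {t t₁ : Tm} (h : HeadStep t t₁) :
    ∀ {s : Tm}, Par t s →
      ∃ s₁, Par t₁ s₁ ∧ HeadRed s s₁ ∧ ((∃ a b, t = .app a b) → Hap s s₁) := by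
  induction h with
  | @beta A B =>
    intro s hp
    cases hp with
    | app hL hB =>
      cases hL with
      | lam hA =>
        refine ⟨subst 0 _ _, par_subst0 hA hB, ?_, ?_⟩
        · exact hap_headred (Relation.ReflTransGen.single Hap1.beta)
        · exact fun _ => Relation.ReflTransGen.single Hap1.beta
    | beta hA hB =>
      exact ⟨subst 0 _ _, par_subst0 hA hB, .refl, fun _ => .refl⟩
  | @app a b w v h ih =>
    intro s hp
    cases hp with
    | app hX hv =>
      obtain ⟨Y, hwY, _, hclause⟩ := ih hX
      have hXY : Hap _ Y := hclause ⟨a, b, rfl⟩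
      exact ⟨.app Y _, .app hwY hv, hap_headred (hap_appL hXY),
        fun _ => hap_appL hXY⟩
  | @lam a a₁ h ih =>
    intro s hp
    cases hp with
    | lam ha' =>
      obtain ⟨b, h1, h2, _⟩ := ih ha'
      exact ⟨.lam b, .lam h1, headred_lam h2, fun ⟨x, y, hxy⟩ => by cases hxy⟩

theorem par_solvable_aux {t w : Tm} (h : HeadRed t w) (hw : IsHNF w) :
    ∀ s, Par t s → Solvable s := by
  induction h using Relation.ReflTransGen.head_induction_on with
  | refl =>
    intro s hp
    exact ⟨s, .refl, hnf_isHNF (hnf_par (isHNF_hnf hw) hp)⟩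
  | head hstep _ ih =>
    intro s hp
    obtain ⟨s₁, hp₁, hred₁, _⟩ := parD hstep hp
    exact solvable_headred hred₁ (ih s₁ hp₁)

theorem par_solvable {t s : Tm} (hp : Par t s) (ht : Solvable t) : Solvable s := by
  obtain ⟨w, hred, hw⟩ := ht
  exact par_solvable_aux hred hw s hp

/-! ### Assembly -/

theorem headstep_beta {t t' : Tm} (h : HeadStep t t') : Beta t t' := by
  induction h with
  | beta => exact .beta
  | app _ ih => exact .appL ih
  | lam _ ih => exact .lam ih

theorem headred_betared {t t' : Tm} (h : HeadRed t t') : ReflTransGen Beta t t' :=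
  Relation.ReflTransGen.mono (fun _ _ => headstep_beta) _ _ h

theorem betaEq_solvable_iff {u v : Tm} (h : BetaEq u v) : (Solvable u ↔ Solvable v) := by
  have h' : Relation.EqvGen Beta u v := h
  clear h
  induction h' with
  | rel x y hxy =>
    constructor
    · exact fun hx => par_solvable (beta_par hxy) hx
    · intro hy
      obtain ⟨w, hred, hw⟩ := hy
      have hchain : ReflTransGen Beta x w :=
        Relation.ReflTransGen.head hxy (headred_betared hred)
      exact hnf_solv (red_st hchain) (isHNF_hnf hw)
  | refl => exact Iff.rfl
  | symm _ _ _ ih => exact ih.symm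
  | trans _ _ _ _ _ ih1 ih2 => exact ih1.trans ih2

end SB

/-- If a λ-term `u` is β-equivalent to a solvable λ-term, then `u` is solvable. -/
theorem solvable_of_betaEq_solvable (u v : SO.Term) (h : BetaEq u v) (hv : Solvable v) :
    Solvable u := (SB.betaEq_solvable_iff h).mpr hv
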